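/- arXiv:2203.14543 — 3 statements merged into one kernel-verified Lean document; each statement's English description precedes it below -/
import Mathlib

section
/- Let L be a free abelian group of finite rank and B: L × L → ℤ a symmetric positive definite bilinear form. Define χ: L × (L_ℝ ⊕ ℝ) → ℝ by χ(l, (n, s)) = s·a(l) + ⟨B(l,·), n⟩ where a(l) satisfies a(l+l') - a(l) - a(l') = B(l,l') and a(0) = 0. Then the function φ(ñ) = min_{l∈L} χ(l, ñ) is well-defined (the minimum is attained) on the cone 𝒞 = (L_ℝ × ℝ_{>0}) ∪ {0}. -/
/-!
Writing `a = B(l,l)/2 + f` with `f` additive gives `χ(l, (n, s)) = (s/2) B(l,l) + g(l)` for an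
additive `g : L → ℝ`. Inverting the Gram matrix through its adjugate bounds the squared
coordinates of `l` by a multiple of `B(l,l)`; hence `B(l,l) → ∞` along the cofinite filter and
`g(l)² = O(B(l,l))`. So for `s > 0` the function `l ↦ χ(l, (n, s))` tends to `+∞` along the
cofinite filter and attains its minimum.
-/

open Filter Matrix

lemma Filter.Tendsto.atTop_mul_add_of_sq_le_mul {α : Type*} {F : Filter α} {q g : α → ℝ}
    {s K : ℝ} (hq : Tendsto q F atTop) (hs : 0 < s) (hK : 0 ≤ K) (hq0 : ∀ x, 0 ≤ q x)
    (hg : ∀ x, g x ^ 2 ≤ K * q x) :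
    Tendsto (fun x => s * q x + g x) F atTop := by
  have hlower : ∀ x, s / 2 * q x + -(K / (2 * s)) ≤ s * q x + g x := by
    intro x
    have hbound : |g x| ≤ s / 2 * q x + K / (2 * s) := by
      -- AM-GM: `(s/2) q + K/(2s) ≥ √(K q)`
      have hsq : (s / 2 * q x + K / (2 * s)) ^ 2 = (s / 2 * q x - K / (2 * s)) ^ 2 + K * q x := by
        field_simp
        ring
      apply abs_le_of_sq_le_sq _ (by have := hq0 x; positivity)
      nlinarith [hg x, sq_nonneg (s / 2 * q x - K / (2 * s))]
    linarith [neg_abs_le (g x)]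
  refine tendsto_atTop_mono hlower (tendsto_atTop_add_const_right _ _ ?_)
  exact hq.const_mul_atTop (half_pos hs)

section PositiveDefiniteForm

variable {L : Type*} [AddCommGroup L] {B : L →+ L →+ ℤ}

lemma apply_self_nonneg (hpos : ∀ l : L, l ≠ 0 → 0 < B l l) (l : L) : 0 ≤ B l l := by
  rcases eq_or_ne l 0 with rfl | hl
  · simp
  · exact (hpos l hl).le

lemma sq_apply_le_mul_apply_self (hsymm : ∀ l l' : L, B l l' = B l' l)
    (hpos : ∀ l : L, l ≠ 0 → 0 < B l l) (u v : L) : B u v ^ 2 ≤ B u u * B v v := by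
  rcases eq_or_ne u 0 with rfl | hu
  · simp
  have h := apply_self_nonneg hpos (B u u • v - B u v • u)
  simp only [map_sub, map_zsmul, AddMonoidHom.sub_apply, AddMonoidHom.smul_apply, smul_eq_mul,
    hsymm v u] at h
  nlinarith [hpos u hu]

lemma exists_addMonoidHom_eq_half_apply_self_add (hsymm : ∀ l l' : L, B l l' = B l' l)
    {a : L → ℤ} (hcoc : ∀ l l' : L, a (l + l') - a l - a l' = B l l') :
    ∃ f : L →+ ℝ, ∀ l, (a l : ℝ) = B l l / 2 + f l := by
  refine ⟨AddMonoidHom.mk' (fun l => (a l : ℝ) - B l l / 2) fun x y => ?_, fun l => ?_⟩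
  · have hxy : (a (x + y) : ℝ) = a x + a y + B x y := by
      exact_mod_cast (by linarith [hcoc x y] : a (x + y) = a x + a y + B x y)
    simp only [map_add, AddMonoidHom.add_apply, hsymm y x, Int.cast_add, hxy]
    ring
  · simp

section Basis

variable {ι : Type*} [Fintype ι] (b : Module.Basis ι ℤ L)

lemma gram_mulVec_repr (l : L) :
    (Matrix.of fun i j => B (b i) (b j)) *ᵥ b.repr l = fun i => B (b i) l := by
  funext i
  calc _ = ∑ j, b.repr l j * B (b i) (b j) := by simp [Matrix.mulVec, dotProduct, mul_comm]
    _ = B (b i) (∑ j, b.repr l j • b j) := by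
      simp only [map_sum, map_zsmul, smul_eq_mul]
    _ = B (b i) l := by rw [b.sum_repr]

lemma apply_self_eq_sum_repr_mul (l : L) : B l l = ∑ i, b.repr l i * B (b i) l := by
  calc B l l = B (∑ i, b.repr l i • b i) l := by rw [b.sum_repr]
    _ = ∑ i, b.repr l i * B (b i) l := by
      simp only [map_sum, map_zsmul, AddMonoidHom.finsetSum_apply, AddMonoidHom.smul_apply,
        smul_eq_mul]

lemma det_gram_ne_zero [DecidableEq ι] (hpos : ∀ l : L, l ≠ 0 → 0 < B l l) :
    (Matrix.of fun i j => B (b i) (b j)).det ≠ 0 := by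
  intro hdet
  obtain ⟨c, hc0, hc⟩ := Matrix.exists_mulVec_eq_zero_iff.mpr hdet
  set l := ∑ i, c i • b i
  have hl : ⇑(b.repr l) = c := b.repr_sum_self c
  have hBl : ∀ i, B (b i) l = 0 := fun i => by
    rw [← congrFun (gram_mulVec_repr b l) i, hl, hc, Pi.zero_apply]
  have hl0 : l ≠ 0 := fun h => hc0 (by rw [← hl, h, map_zero, Finsupp.coe_zero])
  exact (hpos l hl0).ne' (by simp [apply_self_eq_sum_repr_mul b, hBl])

lemma exists_sum_sq_repr_le [DecidableEq ι] (hsymm : ∀ l l' : L, B l l' = B l' l)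
    (hpos : ∀ l : L, l ≠ 0 → 0 < B l l) :
    ∃ K : ℤ, 0 ≤ K ∧ ∀ l : L, ∑ i, b.repr l i ^ 2 ≤ K * B l l := by
  set Q := Matrix.of fun i j => B (b i) (b j)
  have hdet : 1 ≤ Q.det ^ 2 := by
    have := Int.one_le_abs (det_gram_ne_zero b hpos)
    nlinarith [sq_abs Q.det]
  have hdiag : 0 ≤ ∑ i, B (b i) (b i) := Finset.sum_nonneg fun i _ => apply_self_nonneg hpos _
  refine ⟨∑ j, (∑ i, Q.adjugate j i ^ 2) * ∑ i, B (b i) (b i),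
    Finset.sum_nonneg fun j _ => mul_nonneg (by positivity) hdiag, fun l => ?_⟩
  rw [Finset.sum_mul]
  refine Finset.sum_le_sum fun j _ => ?_
  set c := ⇑(b.repr l)
  have hadj : Q.det • c = Q.adjugate *ᵥ fun i => B (b i) l := by
    rw [← gram_mulVec_repr, Matrix.mulVec_mulVec, Matrix.adjugate_mul, Matrix.smul_mulVec,
      Matrix.one_mulVec]
  have hadj_j : Q.det * c j = ∑ i, Q.adjugate j i * B (b i) l := by
    simpa [Matrix.mulVec, dotProduct] using congrFun hadj j
  calc c j ^ 2 ≤ (Q.det * c j) ^ 2 := by nlinarith [sq_nonneg (c j)]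
    _ ≤ (∑ i, Q.adjugate j i ^ 2) * ∑ i, B (b i) l ^ 2 := by
      rw [hadj_j]
      exact Finset.sum_mul_sq_le_sq_mul_sq _ _ _
    _ ≤ (∑ i, Q.adjugate j i ^ 2) * ∑ i, B (b i) (b i) * B l l := by
      gcongr with i
      exact sq_apply_le_mul_apply_self hsymm hpos (b i) l
    _ = (∑ i, Q.adjugate j i ^ 2) * (∑ i, B (b i) (b i)) * B l l := by
      rw [← Finset.sum_mul, mul_assoc]

end Basis

variable [Module.Free ℤ L] [Module.Finite ℤ L]

lemma tendsto_apply_self_cofinite_atTop (hsymm : ∀ l l' : L, B l l' = B l' l)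
    (hpos : ∀ l : L, l ≠ 0 → 0 < B l l) : Tendsto (fun l => B l l) cofinite atTop := by
  classical
  let b := Module.Free.chooseBasis ℤ L
  obtain ⟨K, hK0, hK⟩ := exists_sum_sq_repr_le b hsymm hpos
  refine tendsto_atTop.2 fun R => eventually_cofinite.2 ?_
  have hbox : (Set.univ.pi fun _ : Module.Free.ChooseBasisIndex ℤ L =>
      Set.Icc (-(K * R)) (K * R)).Finite :=
    Set.Finite.pi fun _ => Set.finite_Icc _ _
  refine (hbox.preimage b.equivFun.injective.injOn).subset fun l hl j _ => ?_
  have hlR : B l l ≤ R := (not_le.mp hl).le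
  have hcj : b.repr l j ^ 2 ≤ K * R :=
    calc b.repr l j ^ 2 ≤ ∑ i, b.repr l i ^ 2 :=
          Finset.single_le_sum (fun i _ => sq_nonneg _) (Finset.mem_univ j)
      _ ≤ K * B l l := hK l
      _ ≤ K * R := mul_le_mul_of_nonneg_left hlR hK0
  have h₁ := Int.le_self_sq (b.repr l j)
  have h₂ := Int.le_self_sq (-b.repr l j)
  rw [neg_sq] at h₂
  simp only [Set.mem_Icc, b.equivFun_apply]
  exact ⟨by linarith, by linarith⟩

lemma exists_sq_le_mul_apply_self (hsymm : ∀ l l' : L, B l l' = B l' l)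
    (hpos : ∀ l : L, l ≠ 0 → 0 < B l l) (g : L →+ ℝ) :
    ∃ K : ℝ, 0 ≤ K ∧ ∀ l, g l ^ 2 ≤ K * B l l := by
  classical
  let b := Module.Free.chooseBasis ℤ L
  obtain ⟨K, hK0, hK⟩ := exists_sum_sq_repr_le b hsymm hpos
  refine ⟨(∑ i, g (b i) ^ 2) * K, by positivity, fun l => ?_⟩
  have hg : g l = ∑ i, (b.repr l i : ℝ) * g (b i) := by
    conv_lhs => rw [← b.sum_repr l]
    simp only [map_sum, map_zsmul, zsmul_eq_mul]
  calc g l ^ 2 ≤ (∑ i, (b.repr l i : ℝ) ^ 2) * ∑ i, g (b i) ^ 2 :=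
        hg ▸ Finset.sum_mul_sq_le_sq_mul_sq _ _ _
    _ ≤ (K * B l l) * ∑ i, g (b i) ^ 2 := by
      gcongr
      exact_mod_cast hK l
    _ = (∑ i, g (b i) ^ 2) * K * B l l := by ring

end PositiveDefiniteForm

theorem stmt_4_general (L : Type*) [AddCommGroup L] [Module.Free ℤ L] [Module.Finite ℤ L]
    (B : L →+ L →+ ℤ) (hsymm : ∀ l l' : L, B l l' = B l' l)
    (hpos : ∀ l : L, l ≠ 0 → 0 < B l l)
    (a : L → ℤ)
    (hcoc : ∀ l l' : L, a (l + l') - a l - a l' = B l l')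
    (χ : L → ((L →+ ℝ) × ℝ) → ℝ)
    (hχ : ∀ (l : L) (p : (L →+ ℝ) × ℝ), χ l p = p.2 * a l + p.1 l)
    (C : Set ((L →+ ℝ) × ℝ)) (hC : C = {p | 0 < p.2 ∨ p = 0}) :
    ∀ p ∈ C, ∃ l₀ : L, ∀ l : L, χ l₀ p ≤ χ l p := by
  rintro ⟨n, s⟩ hp
  rw [hC] at hp
  rcases hp with hs | hp0
  · obtain ⟨f, hf⟩ := exists_addMonoidHom_eq_half_apply_self_add hsymm hcoc
    obtain ⟨K, hK0, hK⟩ := exists_sq_le_mul_apply_self hsymm hpos (s • f + n)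
    have hχ_eq : (fun l => χ l (n, s)) = fun l => s / 2 * (B l l : ℝ) + (s • f + n) l := by
      funext l
      simp only [hχ, hf, AddMonoidHom.add_apply, AddMonoidHom.smul_apply, smul_eq_mul]
      ring
    have hB : Tendsto (fun l => (B l l : ℝ)) cofinite atTop :=
      tendsto_intCast_atTop_iff.2 (tendsto_apply_self_cofinite_atTop hsymm hpos)
    have hB0 (l : L) : (0 : ℝ) ≤ B l l := mod_cast apply_self_nonneg hpos l
    have hχ_tendsto : Tendsto (fun l => χ l (n, s)) cofinite atTop :=
      hχ_eq ▸ hB.atTop_mul_add_of_sq_le_mul (half_pos hs) hK0 hB0 hK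
    exact hχ_tendsto.exists_forall_le
  · exact ⟨0, fun l => by simp [hχ, hp0]⟩

/-- For a finite-rank free abelian group `L` with symmetric positive definite
`B : L × L → ℤ` and `a : L → ℤ` with `a 0 = 0`, `a(l+l') - a(l) - a(l') = B(l,l')`, the
function `φ(ñ) = min_{l∈L} χ(l, ñ)`, with `χ(l,(n,s)) = s·a(l) + n(l)` (identifying points
of `L_ℝ` with functionals on `L` via `B`), is well-defined on the cone
`𝒞 = (L_ℝ × ℝ_{>0}) ∪ {0}`: the minimum is attained. -/
theorem stmt_4 (L : Type*) [AddCommGroup L] [Module.Free ℤ L] [Module.Finite ℤ L]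
    (B : L →+ L →+ ℤ) (hsymm : ∀ l l' : L, B l l' = B l' l)
    (hpos : ∀ l : L, l ≠ 0 → 0 < B l l)
    (a : L → ℤ) (ha0 : a 0 = 0)
    (hcoc : ∀ l l' : L, a (l + l') - a l - a l' = B l l')
    (χ : L → ((L →+ ℝ) × ℝ) → ℝ)
    (hχ : ∀ (l : L) (p : (L →+ ℝ) × ℝ), χ l p = p.2 * a l + p.1 l)
    (C : Set ((L →+ ℝ) × ℝ)) (hC : C = {p | 0 < p.2 ∨ p = 0}) :
    ∀ p ∈ C, ∃ l₀ : L, ∀ l : L, χ l₀ p ≤ χ l p :=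
  stmt_4_general L B hsymm hpos a hcoc χ hχ C hC
end

section
/- Let L be a rank-2 lattice in ℝ². The action of Γ = L ⋊ {±1} on ℝ² ∖ ½L (by (l,ε)·x = εx + l) is free and properly discontinuous; consequently the quotient map ℝ² ∖ ½L → (ℝ² ∖ ½L)/Γ is a covering map. -/
/-!
A nontrivial element `x ↦ εx + l` of `Γ` moving a point `x` close to itself is either a
translation by a small nonzero lattice vector, which discreteness of `L` excludes, or a point
reflection `x ↦ -x + l` with `l` close to `2x`, which is excluded because `L` is closed and
`2x ∉ L`. Hence every `x ∉ ½L` has an open neighbourhood `U` with `(U - U) ∩ L = {0}` and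
`(U + U) ∩ L = ∅`, and all nontrivial `Γ`-translates of such a `U` are disjoint from `U`. A free
action with this property makes the quotient map a covering map.
-/

open Set Topology Filter

theorem isCoveringMap_quot_mk_of_disjoint {G E : Type*} [Group G] [MulAction G E]
    [TopologicalSpace E] [ContinuousConstSMul G E] {r : E → E → Prop}
    (hr : ∀ p q, r p q ↔ ∃ g : G, q = g • p)
    (hdisj : ∀ e : E, ∃ U ∈ 𝓝 e, ∀ g : G, ((g • ·) '' U ∩ U).Nonempty → g = 1) :
    IsCoveringMap (Quot.mk r) := by
  have hr' : r = (MulAction.orbitRel G E).r := by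
    ext p q
    rw [hr, MulAction.orbitRel_apply, MulAction.mem_orbit_symm]
    simp only [MulAction.mem_orbit_iff, eq_comm]
  subst hr'
  exact IsQuotientCoveringMap.isCoveringMap (f := Quot.mk _) (G := G)
    { toIsQuotientMap := isQuotientMap_quot_mk
      apply_eq_iff_mem_orbit := Quot.eq.trans ((MulAction.orbitRel G E).iseqv.eqvGen_iff)
      disjoint := hdisj }

lemma exists_isOpen_sub_mem_eq_and_add_notMem {V : Type*} [AddCommGroup V] [TopologicalSpace V]
    [IsTopologicalAddGroup V] [T2Space V] {L : AddSubgroup V} [DiscreteTopology L] {x : V}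
    (hx : x + x ∉ L) :
    ∃ U, IsOpen U ∧ x ∈ U ∧ ∀ u ∈ U, ∀ v ∈ U, (u - v ∈ L → u = v) ∧ u + v ∉ L := by
  obtain ⟨W, hW, hWL⟩ := nhds_inter_eq_singleton_of_mem_discrete
    (DiscreteTopology.isDiscrete (s := (L : Set V))) L.zero_mem
  have hsub : Tendsto (fun p : V × V => p.1 - p.2) (𝓝 x ×ˢ 𝓝 x) (𝓝 0) := by
    simpa [nhds_prod_eq] using continuous_sub.tendsto (x, x)
  have hadd : Tendsto (fun p : V × V => p.1 + p.2) (𝓝 x ×ˢ 𝓝 x) (𝓝 (x + x)) := by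
    simpa [nhds_prod_eq] using continuous_add.tendsto (x, x)
  have hLc : (L : Set V)ᶜ ∈ 𝓝 (x + x) :=
    AddSubgroup.isClosed_of_discrete.isOpen_compl.mem_nhds hx
  obtain ⟨t, ht, htS⟩ :=
    mem_prod_self_iff.mp ((hsub.eventually_mem hW).and (hadd.eventually_mem hLc))
  obtain ⟨U, hUt, hU, hxU⟩ := mem_nhds_iff.mp ht
  refine ⟨U, hU, hxU, fun u hu v hv => ?_⟩
  obtain ⟨huvW, huvL⟩ : u - v ∈ W ∧ u + v ∉ L := htS (mk_mem_prod (hUt hu) (hUt hv))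
  refine ⟨fun huv => ?_, huvL⟩
  have : u - v ∈ W ∩ L := ⟨huvW, huv⟩
  rw [hWL] at this
  exact sub_eq_zero.mp this

section HalfLattice

variable {V : Type*} [AddCommGroup V] (L : AddSubgroup V)

def halfLattice : Set V := {x | x + x ∈ L}

variable [Module ℝ V] {L}

lemma smul_mem_of_eq_one_or_eq_neg_one {ε : ℝ} (hε : ε = 1 ∨ ε = -1) {l : V} (hl : l ∈ L) :
    ε • l ∈ L := by
  rcases hε with rfl | rfl
  · simpa using hl
  · simpa using L.neg_mem hl

lemma smul_add_notMem_halfLattice {ε : ℝ} (hε : ε = 1 ∨ ε = -1) {l : V} (hl : l ∈ L) {x : V}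
    (hx : x ∉ halfLattice L) : ε • x + l ∉ halfLattice L := by
  intro h
  have hεx : ε • (x + x) ∈ L := by
    have : ε • (x + x) = (ε • x + l) + (ε • x + l) - (l + l) := by rw [smul_add]; abel
    exact this ▸ L.sub_mem h (L.add_mem hl hl)
  have hxx : x + x = ε • ε • (x + x) := by
    rw [smul_smul, mul_self_eq_one_iff.mpr hε, one_smul]
  exact hx (show x + x ∈ L from hxx ▸ smul_mem_of_eq_one_or_eq_neg_one hε hεx)

lemma eq_zero_and_eq_one_of_smul_add_eq_self {x : V} (hx : x ∉ halfLattice L) {l : V}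
    (hl : l ∈ L) {ε : ℝ} (hε : ε = 1 ∨ ε = -1) (h : ε • x + l = x) : l = 0 ∧ ε = 1 := by
  rcases hε with rfl | rfl
  · exact ⟨by simpa using h, rfl⟩
  · exfalso
    rw [neg_one_smul, neg_add_eq_iff_eq_add] at h
    exact hx (show x + x ∈ L from h ▸ hl)

variable [TopologicalSpace V] [IsTopologicalAddGroup V] [T2Space V] [DiscreteTopology L]

lemma exists_isOpen_disjoint_smul_add_image {x : V} (hx : x ∉ halfLattice L) :
    ∃ U : Set V, IsOpen U ∧ x ∈ U ∧ U ⊆ (halfLattice L)ᶜ ∧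
      ∀ l ∈ L, ∀ ε : ℝ, (ε = 1 ∨ ε = -1) → ¬(l = 0 ∧ ε = 1) →
        Disjoint U ((fun y => ε • y + l) '' U) := by
  obtain ⟨U, hU, hxU, hUL⟩ := exists_isOpen_sub_mem_eq_and_add_notMem hx
  refine ⟨U, hU, hxU, fun u hu => (hUL u hu u hu).2, fun l hl ε hε hne => ?_⟩
  refine disjoint_left.mpr fun y hy ⟨u, hu, hyu⟩ => ?_
  rcases hε with rfl | rfl
  · have hl' : y - u = l := by rw [← hyu]; simp
    exact hne ⟨by rw [← hl', (hUL y hy u hu).1 (hl' ▸ hl), sub_self], rfl⟩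
  · have hl' : y + u = l := by rw [← hyu]; simp
    exact (hUL y hy u hu).2 (hl' ▸ hl)

end HalfLattice

section SignedTranslations

variable {V : Type*} [AddCommGroup V] [Module ℝ V] (L : AddSubgroup V)

/-- The group `Γ = L ⋊ {±1}`, realised as the permutations `x ↦ εx + l` of `V`. -/
def signedTranslations : Subgroup (Equiv.Perm V) where
  carrier := {σ | ∃ l ∈ L, ∃ ε : ℝ, (ε = 1 ∨ ε = -1) ∧ ∀ x, σ x = ε • x + l}
  one_mem' := ⟨0, L.zero_mem, 1, .inl rfl, fun x => by simp⟩
  mul_mem' := by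
    rintro σ τ ⟨l, hl, ε, hε, hσ⟩ ⟨l', hl', ε', hε', hτ⟩
    refine ⟨ε • l' + l, L.add_mem (smul_mem_of_eq_one_or_eq_neg_one hε hl') hl, ε * ε', ?_,
      fun x => ?_⟩
    · rcases hε with rfl | rfl <;> rcases hε' with rfl | rfl <;> norm_num
    · rw [Equiv.Perm.mul_apply, hτ, hσ, smul_add, smul_smul, add_assoc]
  inv_mem' := by
    rintro σ ⟨l, hl, ε, hε, hσ⟩
    refine ⟨-(ε • l), L.neg_mem (smul_mem_of_eq_one_or_eq_neg_one hε hl), ε, hε, fun x => ?_⟩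
    calc σ⁻¹ x = ε • (ε • σ⁻¹ x + l) + -(ε • l) := by
          rw [smul_add, smul_smul, mul_self_eq_one_iff.mpr hε, one_smul, add_neg_cancel_right]
      _ = ε • x + -(ε • l) := by rw [← hσ]; simp

variable {L}

lemma exists_mem_signedTranslations_apply_eq {l : V} (hl : l ∈ L) {ε : ℝ}
    (hε : ε = 1 ∨ ε = -1) : ∃ σ ∈ signedTranslations L, ∀ x, σ x = ε • x + l := by
  have hmem (σ : Equiv.Perm V) (hσ : ∀ x, σ x = ε • x + l) : σ ∈ signedTranslations L :=
    ⟨l, hl, ε, hε, hσ⟩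
  rcases hε with rfl | rfl
  · exact ⟨Equiv.addRight l, hmem _ fun x => by simp, fun x => by simp⟩
  · exact ⟨(Equiv.neg V).trans (Equiv.addRight l), hmem _ fun x => by simp, fun x => by simp⟩

instance : MulAction (signedTranslations L) {x : V // x ∉ halfLattice L} where
  smul σ x := ⟨(σ : Equiv.Perm V) x, by
    obtain ⟨l, hl, ε, hε, hσ⟩ := σ.2
    exact hσ x ▸ smul_add_notMem_halfLattice hε hl x.2⟩
  one_smul _ := rfl
  mul_smul _ _ _ := rfl

lemma exists_signedTranslations_smul_eq_iff (p q : {x : V // x ∉ halfLattice L}) :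
    (∃ σ : signedTranslations L, q = σ • p) ↔
      ∃ l ∈ L, ∃ ε : ℝ, (ε = 1 ∨ ε = -1) ∧ (q : V) = ε • (p : V) + l := by
  constructor
  · rintro ⟨σ, rfl⟩
    obtain ⟨l, hl, ε, hε, hσ⟩ := σ.2
    exact ⟨l, hl, ε, hε, hσ p⟩
  · rintro ⟨l, hl, ε, hε, hq⟩
    obtain ⟨σ, hσL, hσ⟩ := exists_mem_signedTranslations_apply_eq hl hε
    exact ⟨⟨σ, hσL⟩, Subtype.ext (hq.trans (hσ p).symm)⟩

variable [TopologicalSpace V] [IsTopologicalAddGroup V] [ContinuousConstSMul ℝ V]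

instance : ContinuousConstSMul (signedTranslations L) {x : V // x ∉ halfLattice L} where
  continuous_const_smul σ := by
    obtain ⟨l, hl, ε, hε, hσ⟩ := σ.2
    refine Continuous.subtype_mk ?_ _
    simp only [hσ]
    fun_prop

variable [T2Space V] [DiscreteTopology L]

lemma isCoveringMap_quot_mk_signedTranslations :
    IsCoveringMap (Quot.mk fun p q : {x : V // x ∉ halfLattice L} =>
      ∃ l ∈ L, ∃ ε : ℝ, (ε = 1 ∨ ε = -1) ∧ (q : V) = ε • (p : V) + l) := by
  refine isCoveringMap_quot_mk_of_disjoint (G := signedTranslations L)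
    (fun p q => (exists_signedTranslations_smul_eq_iff p q).symm) fun x => ?_
  obtain ⟨U, hU, hxU, -, hdisj⟩ := exists_isOpen_disjoint_smul_add_image x.2
  refine ⟨Subtype.val ⁻¹' U, (hU.preimage continuous_subtype_val).mem_nhds hxU, ?_⟩
  rintro σ ⟨_, ⟨u, hu, rfl⟩, hσu⟩
  obtain ⟨l, hl, ε, hε, hσ⟩ := σ.2
  by_contra hne
  refine disjoint_left.mp (hdisj l hl ε hε fun h => hne ?_) hσu ⟨u, hu, (hσ u).symm⟩
  ext x
  simp [hσ, h.1, h.2]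

end SignedTranslations

/-- For a full-rank lattice `L ⊂ ℝ²`, the action of `Γ = L ⋊ {±1}`
(by `(l,ε)·x = εx + l`) on `ℝ² ∖ ½L` is free and properly discontinuous (every point has a
neighborhood `U` with `γU ∩ U = ∅` for all `γ ≠ 1`); consequently the quotient map
`ℝ² ∖ ½L → (ℝ² ∖ ½L)/Γ` is a covering map. -/
theorem stmt_8 (L : AddSubgroup (Fin 2 → ℝ)) (b : Module.Basis (Fin 2) ℝ (Fin 2 → ℝ))
    (hL : L = AddSubgroup.closure (Set.range ⇑b))
    (halfL : Set (Fin 2 → ℝ)) (hhalf : halfL = {x : Fin 2 → ℝ | x + x ∈ L}) :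
    (∀ x ∉ halfL, ∀ l ∈ L, ∀ ε : ℝ, (ε = 1 ∨ ε = -1) →
        ε • x + l = x → (l = 0 ∧ ε = 1)) ∧
    (∀ x ∉ halfL, ∃ U : Set (Fin 2 → ℝ), IsOpen U ∧ x ∈ U ∧ U ⊆ halfLᶜ ∧
      ∀ l ∈ L, ∀ ε : ℝ, (ε = 1 ∨ ε = -1) → ¬(l = 0 ∧ ε = 1) →
        Disjoint U ((fun y => ε • y + l) '' U)) ∧
    IsCoveringMap (fun x : {x : Fin 2 → ℝ // x ∉ halfL} =>
      Quot.mk (fun p q : {x : Fin 2 → ℝ // x ∉ halfL} =>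
        ∃ l ∈ L, ∃ ε : ℝ, (ε = 1 ∨ ε = -1) ∧
          (q : Fin 2 → ℝ) = ε • (p : Fin 2 → ℝ) + l) x) := by
  have : DiscreteTopology L := by
    rw [hL, ← Submodule.span_int_eq_addSubgroupClosure]
    infer_instance
  obtain rfl : halfL = halfLattice L := hhalf
  exact ⟨fun x hx l hl ε hε => eq_zero_and_eq_one_of_smul_add_eq_self hx hl hε,
    fun x hx => exists_isOpen_disjoint_smul_add_image hx,
    isCoveringMap_quot_mk_signedTranslations⟩
end

section
/- Let Γ = L ⋊ H act on ℝ^d with L ⊂ ℝ^d a full-rank lattice acting by translations and H a finite subgroup of GL(d, ℤ) (preserving L). If Σ̄ is a Γ-invariant locally finite polyhedral decomposition of ℝ^d such that for each cell σ̄ and each γ ∈ Γ ∖ {1} not fixing σ̄ pointwise we have Star(σ̄) ∩ γ·Star(σ̄) = ∅ whenever γ has no fixed points in Star(σ̄), then the restriction of the quotient map ℝ^d → ℝ^d/Γ to the union of open stars of cells avoiding the fixed locus of Γ is a covering map onto its image. -/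
/-!
The group `Γ = L ⋊ H` is realised as the group of permutations `x ↦ h x + l` of `ℝ^d`, whose
orbit relation is `r`. An open star `U` in the union `W` of the good stars is disjoint
from all of its nontrivial `Γ`-translates, so the quotient map admits a trivialization with discrete
fibre `Γ` over the image of `U`; since `W` is `Γ`-saturated, these trivializations restrict to
`W → W/Γ`.
-/

open Set Topology

section CoveringOfSMulDisjoint

variable {E X G : Type*} [TopologicalSpace E] [TopologicalSpace X] [Group G] [MulAction G E]
  [ContinuousConstSMul G E] {f : E → X}

theorem Topology.IsQuotientMap.isCoveringMapOn_image_of_smul_disjoint (hf : IsQuotientMap f)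
    (hfG : ∀ {e₁ e₂}, f e₁ = f e₂ ↔ e₁ ∈ MulAction.orbit G e₂) {W : Set E}
    (hW : ∀ e ∈ W, ∃ U, IsOpen U ∧ e ∈ U ∧ ∀ g : G, ((g • ·) '' U ∩ U).Nonempty → g = 1) :
    IsCoveringMapOn f (f '' W) := by
  let : TopologicalSpace G := ⊥
  have : DiscreteTopology G := ⟨rfl⟩
  choose e heW hfe using fun x : f '' W => x.2
  choose U hUopen heU hU using fun x : f '' W => hW (e x) (heW x)
  refine IsCoveringMapOn.mk _ _ (fun _ => G)
    (fun x => hf.trivializationOfSMulDisjoint hfG (U x) (hUopen x) (hU x)) fun x => ?_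
  rw [trivializationOfSMulDisjoint_baseSet, ← hfe x]
  exact mem_image_of_mem f (heU x)

theorem IsCoveringMapOn.isCoveringMap_imageFactorization {W : Set E}
    (hf : IsCoveringMapOn f (f '' W)) (hW : f ⁻¹' (f '' W) ⊆ W) :
    IsCoveringMap (W.imageFactorization f) :=
  hf.isCoveringMap_restrictPreimage.comp_homeomorph
    (Homeomorph.setCongr (hW.antisymm (subset_preimage_image f W)).symm)

theorem Topology.IsQuotientMap.isCoveringMap_imageFactorization_of_smul_disjoint
    (hf : IsQuotientMap f) (hfG : ∀ {e₁ e₂}, f e₁ = f e₂ ↔ e₁ ∈ MulAction.orbit G e₂)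
    {W : Set E} (hWinv : ∀ g : G, ∀ e ∈ W, g • e ∈ W)
    (hW : ∀ e ∈ W, ∃ U, IsOpen U ∧ e ∈ U ∧ ∀ g : G, ((g • ·) '' U ∩ U).Nonempty → g = 1) :
    IsCoveringMap (W.imageFactorization f) := by
  refine (hf.isCoveringMapOn_image_of_smul_disjoint hfG hW).isCoveringMap_imageFactorization ?_
  rintro x ⟨w, hw, hwx⟩
  obtain ⟨g, rfl⟩ := hfG.mp hwx.symm
  exact hWinv g w hw

end CoveringOfSMulDisjoint

theorem Quot.mk_eq_mk_iff_mem_orbit {G α : Type*} [Group G] [MulAction G α]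
    {r : α → α → Prop} (hr : ∀ x y, r x y ↔ y ∈ MulAction.orbit G x) {x y : α} :
    Quot.mk r x = Quot.mk r y ↔ x ∈ MulAction.orbit G y := by
  have hequiv : Equivalence r := by
    refine ⟨fun x => (hr x x).2 (MulAction.mem_orbit_self x), fun hxy => ?_, fun hxy hyz => ?_⟩
    · exact (hr _ _).2 (MulAction.mem_orbit_symm.1 ((hr _ _).1 hxy))
    · rw [hr, ← MulAction.orbit_eq_iff.2 ((hr _ _).1 hxy)]
      exact (hr _ _).1 hyz
  rw [Quot.eq, hequiv.eqvGen_iff, hr, MulAction.mem_orbit_symm]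

section AffinePermSubgroup

variable {k V : Type*} [Semiring k] [AddCommGroup V] [Module k V]

def LinearEquiv.affinePerm (h : V ≃ₗ[k] V) (l : V) : Equiv.Perm V :=
  h.toEquiv.trans (Equiv.addRight l)

def affinePermSubgroup (L : AddSubgroup V) (H : Subgroup (V ≃ₗ[k] V))
    (hHL : ∀ h ∈ H, ∀ x ∈ L, h x ∈ L) : Subgroup (Equiv.Perm V) where
  carrier := {g | ∃ l ∈ L, ∃ h ∈ H, ∀ x, g x = h x + l}
  one_mem' := ⟨0, L.zero_mem, 1, H.one_mem, fun x => (add_zero x).symm⟩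
  mul_mem' := by
    rintro g₁ g₂ ⟨l₁, hl₁, h₁, hh₁, hg₁⟩ ⟨l₂, hl₂, h₂, hh₂, hg₂⟩
    refine ⟨h₁ l₂ + l₁, L.add_mem (hHL h₁ hh₁ l₂ hl₂) hl₁, h₁ * h₂, H.mul_mem hh₁ hh₂, fun x => ?_⟩
    rw [Equiv.Perm.mul_apply, hg₁, hg₂, map_add, add_assoc]
    rfl
  inv_mem' := by
    rintro g ⟨l, hl, h, hh, hg⟩
    refine ⟨-h⁻¹ l, L.neg_mem (hHL _ (H.inv_mem hh) l hl), h⁻¹, H.inv_mem hh, fun x => ?_⟩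
    rw [Equiv.Perm.inv_eq_iff_eq, hg, map_add, map_neg]
    simp

variable {L : AddSubgroup V} {H : Subgroup (V ≃ₗ[k] V)} {hHL : ∀ h ∈ H, ∀ x ∈ L, h x ∈ L}

theorem mem_orbit_affinePermSubgroup_iff {x y : V} :
    y ∈ MulAction.orbit (affinePermSubgroup L H hHL) x ↔ ∃ l ∈ L, ∃ h ∈ H, y = h x + l := by
  constructor
  · rintro ⟨⟨g, l, hl, h, hh, hg⟩, rfl⟩
    exact ⟨l, hl, h, hh, hg x⟩
  · rintro ⟨l, hl, h, hh, rfl⟩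
    exact ⟨⟨h.affinePerm l, l, hl, h, hh, fun _ => rfl⟩, rfl⟩

theorem affinePermSubgroup.eq_one_of_smul_image_inter_nonempty {U : Set V}
    (hU : ∀ l ∈ L, ∀ h ∈ H, ¬(l = 0 ∧ h = 1) → Disjoint U ((fun x => h x + l) '' U))
    (g : affinePermSubgroup L H hHL) (hg : ((g • ·) '' U ∩ U).Nonempty) : g = 1 := by
  obtain ⟨_, ⟨u, hu, rfl⟩, hgu⟩ := hg
  obtain ⟨l, hl, h, hh, hgx⟩ := g.2
  by_cases htriv : l = 0 ∧ h = 1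
  · refine eq_of_smul_eq_smul (α := V) fun x => ?_
    rw [one_smul, Subgroup.smul_def, Equiv.Perm.smul_def, hgx, htriv.1, htriv.2, add_zero]
    rfl
  · exact ((hU l hl h hh htriv).ne_of_mem hgu ⟨u, hu, (hgx u).symm⟩ rfl).elim

end AffinePermSubgroup

instance affinePermSubgroup.continuousConstSMul {𝕜 V : Type*} [NontriviallyNormedField 𝕜]
    [CompleteSpace 𝕜] [AddCommGroup V] [Module 𝕜 V] [TopologicalSpace V] [IsTopologicalAddGroup V]
    [ContinuousSMul 𝕜 V] [T2Space V] [FiniteDimensional 𝕜 V] {L : AddSubgroup V} {H : Subgroup (V ≃ₗ[𝕜] V)}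
    {hHL : ∀ h ∈ H, ∀ x ∈ L, h x ∈ L} : ContinuousConstSMul (affinePermSubgroup L H hHL) V where
  continuous_const_smul g := by
    obtain ⟨l, -, h, -, hg⟩ := g.2
    rw [show (g • · : V → V) = fun x => h x + l from funext hg]
    exact (h.toLinearMap.continuous_of_finiteDimensional).add continuous_const

theorem stmt_16_general (d : ℕ) (L : AddSubgroup (Fin d → ℝ))
    (Hs : Set ((Fin d → ℝ) ≃ₗ[ℝ] (Fin d → ℝ)))
    (hHone : 1 ∈ Hs) (hHmul : ∀ h ∈ Hs, ∀ h' ∈ Hs, h * h' ∈ Hs)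
    (hHinv : ∀ h ∈ Hs, h⁻¹ ∈ Hs)
    (hHL : ∀ h ∈ Hs, ∀ x ∈ L, h x ∈ L)
    (act : (Fin d → ℝ) → ((Fin d → ℝ) ≃ₗ[ℝ] (Fin d → ℝ)) → (Fin d → ℝ) → (Fin d → ℝ))
    (hact : ∀ l h x, act l h x = h x + l)
    (ι : Type*) (Star : ι → Set (Fin d → ℝ)) (hopen : ∀ i, IsOpen (Star i))
    (J : Set ι)
    (hinvariant : ∀ l ∈ L, ∀ h ∈ Hs, ∀ i ∈ J, ∃ j ∈ J, act l h '' Star i = Star j)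
    (hdisj : ∀ i ∈ J, ∀ l ∈ L, ∀ h ∈ Hs, ¬(l = 0 ∧ h = 1) →
      Disjoint (Star i) (act l h '' Star i))
    (W : Set (Fin d → ℝ)) (hW : W = ⋃ i ∈ J, Star i)
    (r : (Fin d → ℝ) → (Fin d → ℝ) → Prop)
    (hr : r = fun x y => ∃ l ∈ L, ∃ h ∈ Hs, y = act l h x) :
    IsCoveringMap (fun x : W =>
      (⟨Quot.mk r ↑x, ⟨↑x, x.2, rfl⟩⟩ : (Quot.mk r '' W : Set (Quot r)))) := by
  obtain rfl : act = fun l h x => h x + l := funext fun l => funext fun h => funext (hact l h)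
  subst hW hr
  let H : Subgroup ((Fin d → ℝ) ≃ₗ[ℝ] (Fin d → ℝ)) :=
    { carrier := Hs, one_mem' := hHone, mul_mem' := fun {a b} ha hb => hHmul a ha b hb,
      inv_mem' := fun {a} ha => hHinv a ha }
  let Γ := affinePermSubgroup L H fun h hh => hHL h hh
  have hWinv : ∀ g : Γ, ∀ e ∈ ⋃ i ∈ J, Star i, g • e ∈ ⋃ i ∈ J, Star i := by
    intro g e he
    obtain ⟨i, hi, hei⟩ := mem_iUnion₂.1 he
    obtain ⟨l, hl, h, hh, hg⟩ := g.2
    obtain ⟨j, hj, hij⟩ := hinvariant l hl h (show h ∈ Hs from hh) i hi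
    exact mem_iUnion₂.2 ⟨j, hj, hij ▸ ⟨e, hei, (hg e).symm⟩⟩
  have hstar : ∀ e ∈ ⋃ i ∈ J, Star i, ∃ U, IsOpen U ∧ e ∈ U ∧
      ∀ g : Γ, ((g • ·) '' U ∩ U).Nonempty → g = 1 := by
    intro e he
    obtain ⟨i, hi, hei⟩ := mem_iUnion₂.1 he
    exact ⟨Star i, hopen i, hei,
      affinePermSubgroup.eq_one_of_smul_image_inter_nonempty (hdisj i hi)⟩
  exact isQuotientMap_quot_mk.isCoveringMap_imageFactorization_of_smul_disjoint
    (Quot.mk_eq_mk_iff_mem_orbit fun _ _ => mem_orbit_affinePermSubgroup_iff.symm) hWinv hstar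

/-- Let `Γ = L ⋊ H` act on `ℝ^d`, with `L` a full-rank lattice acting by
translations and `H` a finite group of linear automorphisms preserving `L`; the action of
`γ = (l,h)` is `x ↦ h(x) + l`. Given a `Γ`-invariant family of open stars of cells such
that each good star avoids the fixed locus `F` and satisfies
`Star(σ̄) ∩ γ·Star(σ̄) = ∅` for all `γ ≠ 1`, the restriction of the quotient map
`ℝ^d → ℝ^d/Γ` to the union `W` of the good stars is a covering map onto its image. -/
theorem stmt_16 (d : ℕ) (L : AddSubgroup (Fin d → ℝ))
    (bL : Module.Basis (Fin d) ℝ (Fin d → ℝ))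
    (hL : L = AddSubgroup.closure (Set.range ⇑bL))
    (Hs : Set ((Fin d → ℝ) ≃ₗ[ℝ] (Fin d → ℝ))) (hHfin : Hs.Finite)
    (hHone : 1 ∈ Hs) (hHmul : ∀ h ∈ Hs, ∀ h' ∈ Hs, h * h' ∈ Hs)
    (hHinv : ∀ h ∈ Hs, h⁻¹ ∈ Hs)
    (hHL : ∀ h ∈ Hs, ∀ x ∈ L, h x ∈ L)
    (act : (Fin d → ℝ) → ((Fin d → ℝ) ≃ₗ[ℝ] (Fin d → ℝ)) → (Fin d → ℝ) → (Fin d → ℝ))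
    (hact : ∀ l h x, act l h x = h x + l)
    (F : Set (Fin d → ℝ))
    (hF : F = {x | ∃ l ∈ L, ∃ h ∈ Hs, ¬(l = 0 ∧ h = 1) ∧ act l h x = x})
    (ι : Type*) (Star : ι → Set (Fin d → ℝ)) (hopen : ∀ i, IsOpen (Star i))
    (J : Set ι) (havoid : ∀ i ∈ J, Disjoint (Star i) F)
    (hinvariant : ∀ l ∈ L, ∀ h ∈ Hs, ∀ i ∈ J, ∃ j ∈ J, act l h '' Star i = Star j)
    (hdisj : ∀ i ∈ J, ∀ l ∈ L, ∀ h ∈ Hs, ¬(l = 0 ∧ h = 1) →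
      Disjoint (Star i) (act l h '' Star i))
    (W : Set (Fin d → ℝ)) (hW : W = ⋃ i ∈ J, Star i)
    (r : (Fin d → ℝ) → (Fin d → ℝ) → Prop)
    (hr : r = fun x y => ∃ l ∈ L, ∃ h ∈ Hs, y = act l h x) :
    IsCoveringMap (fun x : W =>
      (⟨Quot.mk r ↑x, ⟨↑x, x.2, rfl⟩⟩ : (Quot.mk r '' W : Set (Quot r)))) :=
  stmt_16_general d L Hs hHone hHmul hHinv hHL act hact ι Star hopen J hinvariant hdisj W hW r hr
end
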